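/- arXiv:2008.09183 — 2 statements merged into one kernel-verified Lean document; each statement's English description precedes it below -/
import Mathlib

section
/- Let p = 1.409, q = 1/p. There is no configuration consisting of one point Y with p ≤ |Y| ≤ 1.85 and nine points X₁, …, X₉ with 1 ≤ |Xᵢ| ≤ 1.22, such that dist(Xᵢ, Xⱼ) ≥ q for all i ≠ j and dist(Y, Xᵢ) ≥ p for all i. -/
/-!
Identify the plane with `ℂ` and look at the arguments of the ten points. The norm bounds and the
law of cosines force the angle at the origin between two `Xᵢ` to be at least `0.581`, and between
`Y` and an `Xᵢ` at least `0.82`. Give every `Xᵢ` an arc of half-width `0.2905` and `Y` one of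
half-width `0.5295`, centred at their arguments: these arcs are then pairwise disjoint on the unit
circle, yet their total length `2 · (9 · 0.2905 + 0.5295) = 6.288` exceeds `2π`.
-/

open Real

/-- The arcs of half-width `r i` centred at `θ i` are pairwise disjoint on `ℝ / 2πℤ`. -/
theorem sum_le_pi_of_arcs_disjoint {n : ℕ} (θ r : Fin (n + 2) → ℝ)
    (hsep : ∀ i j, i ≠ j → θ i ≤ θ j →
      r i + r j ≤ θ j - θ i ∧ r i + r j ≤ 2 * π - (θ j - θ i)) :
    ∑ i, r i ≤ π := by
  set σ := Tuple.sort θ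
  have hθσ : Monotone (θ ∘ σ) := Tuple.monotone_sort θ
  let gap (k : Fin (n + 2)) : ℝ :=
    θ (σ (k + 1)) - θ (σ k) + if k = Fin.last _ then 2 * π else 0
  have hgap : ∀ k, r (σ k) + r (σ (k + 1)) ≤ gap k := by
    intro k
    have hne : σ k ≠ σ (k + 1) := σ.injective.ne (by simp)
    by_cases hk : k = Fin.last _
    · have hk1 : k + 1 = 0 := hk ▸ Fin.last_add_one _
      rw [hk1] at hne ⊢
      have := (hsep _ _ hne.symm (hθσ (Fin.zero_le k))).2
      simp only [gap, hk1, if_pos hk]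
      linarith
    · have hle : k ≤ k + 1 := (Fin.lt_add_one_iff.2 (Fin.lt_last_iff_ne_last.2 hk)).le
      simpa [gap, hk] using (hsep _ _ hne (hθσ hle)).1
  have hshift : ∀ f : Fin (n + 2) → ℝ, ∑ k, f (k + 1) = ∑ k, f k := fun f =>
    Equiv.sum_comp (Equiv.addRight 1) f
  have hsum_gap : ∑ k, gap k = 2 * π := by
    simp only [gap, Finset.sum_add_distrib, Finset.sum_sub_distrib, hshift fun k => θ (σ k)]
    simp
  have hsum_r : ∑ k, (r (σ k) + r (σ (k + 1))) = 2 * ∑ i, r i := by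
    rw [Finset.sum_add_distrib, hshift (fun k => r (σ k)), Equiv.sum_comp σ r]
    ring
  have := Finset.sum_le_sum fun k (_ : k ∈ Finset.univ) => hgap k
  linarith

theorem le_and_le_two_pi_sub_of_cos_le {s d : ℝ} (hs : s ∈ Set.Icc 0 π)
    (hd : d ∈ Set.Icc 0 (2 * π)) (h : cos d ≤ cos s) : s ≤ d ∧ s ≤ 2 * π - d := by
  rcases le_or_gt d π with hdπ | hπd
  · have : s ≤ d := (strictAntiOn_cos.le_iff_ge ⟨hd.1, hdπ⟩ hs).1 h
    exact ⟨this, by linarith [hs.2]⟩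
  · have : s ≤ 2 * π - d := by
      rw [← cos_two_pi_sub] at h
      exact (strictAntiOn_cos.le_iff_ge ⟨by linarith [hd.2], by linarith⟩ hs).1 h
    exact ⟨by linarith [hs.2], this⟩

theorem sum_le_pi_of_cos_arg_sub_le {n : ℕ} (z : Fin (n + 2) → ℂ) (r : Fin (n + 2) → ℝ)
    (hr : ∀ i j, i ≠ j → r i + r j ∈ Set.Icc 0 π)
    (hz : ∀ i j, i ≠ j → cos ((z i).arg - (z j).arg) ≤ cos (r i + r j)) :
    ∑ i, r i ≤ π := by
  refine sum_le_pi_of_arcs_disjoint (fun i => (z i).arg) r fun i j hij hle => ?_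
  have hd : (z j).arg - (z i).arg ∈ Set.Icc 0 (2 * π) :=
    ⟨sub_nonneg.2 hle, by linarith [Complex.neg_pi_lt_arg (z i), Complex.arg_le_pi (z j)]⟩
  refine le_and_le_two_pi_sub_of_cos_le (hr i j hij) hd ?_
  rw [← cos_neg, neg_sub]
  exact hz i j hij

theorem Complex.norm_mul_norm_mul_cos_arg_sub (a b : ℂ) :
    ‖a‖ * ‖b‖ * Real.cos (a.arg - b.arg) = a.re * b.re + a.im * b.im := by
  rw [Real.cos_sub]
  linear_combination (‖b‖ * Real.cos b.arg) * norm_mul_cos_arg a + a.re * norm_mul_cos_arg b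
    + (‖b‖ * Real.sin b.arg) * norm_mul_sin_arg a + a.im * norm_mul_sin_arg b

theorem Complex.norm_sub_sq_eq_norm_sq_add_norm_sq_sub_two_mul_cos_arg_sub (a b : ℂ) :
    ‖a - b‖ ^ 2 = ‖a‖ ^ 2 + ‖b‖ ^ 2 - 2 * (‖a‖ * ‖b‖ * Real.cos (a.arg - b.arg)) := by
  simp only [norm_mul_norm_mul_cos_arg_sub, Complex.sq_norm, normSq_apply, sub_re, sub_im]
  ring

theorem Complex.cos_arg_sub_le {a b : ℂ} {d c : ℝ} (hd₀ : 0 ≤ d) (hd : d ≤ ‖a - b‖)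
    (hab : 0 < ‖a‖ * ‖b‖) (hc : ‖a‖ ^ 2 + ‖b‖ ^ 2 - d ^ 2 ≤ 2 * c * (‖a‖ * ‖b‖)) :
    Real.cos (a.arg - b.arg) ≤ c := by
  have := norm_sub_sq_eq_norm_sq_add_norm_sq_sub_two_mul_cos_arg_sub a b
  have : d ^ 2 ≤ ‖a - b‖ ^ 2 := pow_le_pow_left₀ hd₀ hd 2
  nlinarith

theorem one_sub_sq_div_two_add_pow_four_div_le_cos {x : ℝ} (hx : x ^ 2 ≤ 8) :
    1 - x ^ 2 / 2 + x ^ 4 / 32 ≤ cos x := by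
  have half : 1 - (x / 2) ^ 2 / 2 ≤ cos (x / 2) := one_sub_sq_div_two_le_cos
  have double : cos x = 2 * cos (x / 2) ^ 2 - 1 := by
    rw [← cos_two_mul]; ring_nf
  nlinarith

theorem cos_arg_sub_le_cos_of_inner_inner {a b : ℂ} (ha : ‖a‖ ∈ Set.Icc 1 1.22)
    (hb : ‖b‖ ∈ Set.Icc 1 1.22) (hab : 1 / 1.409 ≤ ‖a - b‖) :
    cos (a.arg - b.arg) ≤ cos 0.581 := by
  obtain ⟨ha₀, ha₁⟩ := ha
  obtain ⟨hb₀, hb₁⟩ := hb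
  have hcos : (0.8345 : ℝ) ≤ cos 0.581 :=
    le_trans (by norm_num) (one_sub_sq_div_two_add_pow_four_div_le_cos (by norm_num))
  refine Complex.cos_arg_sub_le (by norm_num) hab (by positivity) ?_
  nlinarith [mul_nonneg (sub_nonneg.2 ha₁) (sub_nonneg.2 hb₁),
    mul_nonneg (sub_nonneg.2 ha₀) (sub_nonneg.2 hb₀),
    mul_nonneg (sub_nonneg.2 ha₁) (sub_nonneg.2 hb₀),
    mul_nonneg (sub_nonneg.2 ha₀) (sub_nonneg.2 hb₁), sq_nonneg (‖a‖ - ‖b‖),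
    mul_le_mul_of_nonneg_right hcos (by positivity : (0 : ℝ) ≤ ‖a‖ * ‖b‖)]

theorem cos_arg_sub_le_cos_of_outer_inner {a b : ℂ} (ha : ‖a‖ ∈ Set.Icc 1.409 1.85)
    (hb : ‖b‖ ∈ Set.Icc 1 1.22) (hab : 1.409 ≤ ‖a - b‖) :
    cos (a.arg - b.arg) ≤ cos 0.82 := by
  obtain ⟨ha₀, ha₁⟩ := ha
  obtain ⟨hb₀, hb₁⟩ := hb
  have hcos : (0.677 : ℝ) ≤ cos 0.82 :=
    le_trans (by norm_num) (one_sub_sq_div_two_add_pow_four_div_le_cos (by norm_num))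
  refine Complex.cos_arg_sub_le (by norm_num) hab (by positivity) ?_
  nlinarith [mul_nonneg (sub_nonneg.2 ha₁) (sub_nonneg.2 hb₁),
    mul_nonneg (sub_nonneg.2 ha₀) (sub_nonneg.2 hb₀),
    mul_nonneg (sub_nonneg.2 ha₁) (sub_nonneg.2 hb₀),
    mul_nonneg (sub_nonneg.2 ha₀) (sub_nonneg.2 hb₁), sq_nonneg (‖a‖ - ‖b‖),
    mul_le_mul_of_nonneg_right hcos (by positivity : (0 : ℝ) ≤ ‖a‖ * ‖b‖)]

/-- Impossible: one point Y with p ≤ |Y| ≤ 1.85 and nine points Xᵢ with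
1 ≤ |Xᵢ| ≤ 1.22, pairwise X-distances ≥ q = 1/p and dist(Y, Xᵢ) ≥ p = 1.409. -/
theorem stmt_10 (Y : EuclideanSpace ℝ (Fin 2)) (X : Fin 9 → EuclideanSpace ℝ (Fin 2))
    (hY : (1.409 : ℝ) ≤ ‖Y‖ ∧ ‖Y‖ ≤ 1.85)
    (hX : ∀ i, (1 : ℝ) ≤ ‖X i‖ ∧ ‖X i‖ ≤ 1.22)
    (hXX : ∀ i j, i ≠ j → (1 / 1.409 : ℝ) ≤ dist (X i) (X j))
    (hYX : ∀ i, (1.409 : ℝ) ≤ dist Y (X i)) : False := by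
  let e := Complex.orthonormalBasisOneI.repr.symm
  have hnorm (x) : ‖e x‖ = ‖x‖ := e.norm_map x
  have hdist (x y) : ‖e x - e y‖ = dist x y := by rw [← map_sub, e.norm_map, dist_eq_norm]
  have hYX' (i) : cos ((e Y).arg - (e (X i)).arg) ≤ cos (0.5295 + 0.2905) := by
    refine (cos_arg_sub_le_cos_of_outer_inner ?_ ?_ ?_).trans_eq (by norm_num)
    exacts [hnorm Y ▸ hY, hnorm _ ▸ hX i, hdist Y _ ▸ hYX i]
  have hXX' (i j) (hij : i ≠ j) :
      cos ((e (X i)).arg - (e (X j)).arg) ≤ cos (0.2905 + 0.2905) := by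
    refine (cos_arg_sub_le_cos_of_inner_inner ?_ ?_ ?_).trans_eq (by norm_num)
    exacts [hnorm _ ▸ hX i, hnorm _ ▸ hX j, hdist _ _ ▸ hXX i j hij]
  let z : Fin 10 → ℂ := Fin.cons (e Y) fun i => e (X i)
  let r : Fin 10 → ℝ := Fin.cons 0.5295 fun _ => 0.2905
  have hr (i) : 0 ≤ r i ∧ r i ≤ 1 := by cases i using Fin.cases <;> norm_num [r]
  have hsum : ∑ i, r i ≤ π := by
    refine sum_le_pi_of_cos_arg_sub_le z r (fun i j _ => ?_) fun i j hij => ?_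
    · exact ⟨by linarith [hr i, hr j], by linarith [hr i, hr j, pi_gt_three]⟩
    · cases i using Fin.cases with
      | zero => cases j using Fin.cases with
        | zero => exact absurd rfl hij
        | succ j => exact hYX' j
      | succ i => cases j using Fin.cases with
        | zero =>
          have := hYX' i
          rw [← cos_neg, neg_sub, add_comm] at this
          exact this
        | succ j => exact hXX' i j (ne_of_apply_ne Fin.succ hij)
  have : ∑ i, r i = 3.144 := by simp [r, Fin.sum_cons]; norm_num
  linarith [pi_lt_d4]
end

section
/- Let p = 1.409. It is impossible to have 11 points in the annulus {P : 1.5 ≤ |P| ≤ 1 + p} with pairwise distances at least p. (Indeed 11·Φ_p(1.5, 1+p) > 360°.) -/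
/-!
Identify the plane with `ℂ`. By the law of cosines, two points of the annulus `r ≤ |z| ≤ R` at
distance at least `d` subtend at the origin an angle whose cosine is at most
`(r² + R² - d²) / (2rR)`; for `r = 1.5`, `R = 2.409`, `d = 1.409` this is below `cos 0.5713`.
Sorting the arguments of the points, consecutive gaps (including the one wrapping around the
circle) are therefore at least `0.5713`, and `11 · 0.5713 > 2π`.
-/

open Real

theorem Complex.law_cos_arg_sub_arg {z w : ℂ} (hz : z ≠ 0) (hw : w ≠ 0) :
    Real.cos (z.arg - w.arg) * (2 * ‖z‖ * ‖w‖) = ‖z‖ ^ 2 + ‖w‖ ^ 2 - ‖z - w‖ ^ 2 := by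
  have hz' : ‖z‖ ≠ 0 := norm_ne_zero_iff.2 hz
  have hw' : ‖w‖ ≠ 0 := norm_ne_zero_iff.2 hw
  rw [Real.cos_sub, cos_arg hz, cos_arg hw, sin_arg, sin_arg, Complex.sq_norm, Complex.sq_norm, Complex.sq_norm,
    normSq_apply, normSq_apply, normSq_apply]
  field_simp
  simp only [sub_re, sub_im]
  ring

/-- `d² ≤ R (R - r)` is the regime in which `Φ_d(r, R)` is attained by the arccos term,
i.e. the two points are worst placed on the two boundary circles. -/
theorem annulus_law_cos_bound {r R d x y : ℝ} (hr : 0 < r) (hd : d ^ 2 ≤ R * (R - r))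
    (hrx : r ≤ x) (hxy : x ≤ y) (hyR : y ≤ R) :
    (x ^ 2 + y ^ 2 - d ^ 2) * (r * R) ≤ (r ^ 2 + R ^ 2 - d ^ 2) * (x * y) := by
  have hy : (x ^ 2 + y ^ 2 - d ^ 2) * R ≤ (x ^ 2 + R ^ 2 - d ^ 2) * y := by
    nlinarith [mul_nonneg (sub_nonneg.2 hyR) (by nlinarith : 0 ≤ R * y - x ^ 2 + d ^ 2)]
  have hx : (x ^ 2 + R ^ 2 - d ^ 2) * r ≤ (r ^ 2 + R ^ 2 - d ^ 2) * x := by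
    nlinarith [mul_le_mul_of_nonneg_left (hxy.trans hyR) hr.le]
  nlinarith

theorem Complex.cos_arg_sub_arg_le_of_mem_annulus {r R d : ℝ} {z w : ℂ} (hr : 0 < r)
    (hd0 : 0 ≤ d) (hd : d ^ 2 ≤ R * (R - r)) (hz : ‖z‖ ∈ Set.Icc r R) (hw : ‖w‖ ∈ Set.Icc r R)
    (hzw : d ≤ ‖z - w‖) : Real.cos (z.arg - w.arg) ≤ (r ^ 2 + R ^ 2 - d ^ 2) / (2 * r * R) := by
  wlog hle : ‖z‖ ≤ ‖w‖ generalizing z w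
  · rw [← Real.cos_neg, neg_sub]
    exact this hw hz (norm_sub_rev z w ▸ hzw) (le_of_not_ge hle)
  have hz0 : 0 < ‖z‖ := hr.trans_le hz.1
  have hw0 : 0 < ‖w‖ := hr.trans_le hw.1
  have hR : 0 < R := hw0.trans_le hw.2
  have hlaw := law_cos_arg_sub_arg (norm_pos_iff.1 hz0) (norm_pos_iff.1 hw0)
  have hbound := annulus_law_cos_bound hr hd hz.1 hle hw.2
  have hdist : d ^ 2 ≤ ‖z - w‖ ^ 2 := pow_le_pow_left₀ hd0 hzw 2
  rw [le_div_iff₀ (by positivity)]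
  refine le_of_mul_le_mul_right ?_ (mul_pos hz0 hw0)
  nlinarith [mul_pos hr hR]

theorem le_of_cos_le_cos {α δ : ℝ} (hδ : 0 ≤ δ) (hα : α ≤ π) (h : cos δ ≤ cos α) : α ≤ δ := by
  by_contra! hlt
  exact (cos_lt_cos_of_nonneg_of_le_pi hδ hα hlt).not_ge h

theorem mul_le_last_sub_zero_of_le_succ_sub {n : ℕ} {y : Fin (n + 1) → ℝ} {α : ℝ}
    (h : ∀ k : Fin n, α ≤ y k.succ - y k.castSucc) : n * α ≤ y (Fin.last n) - y 0 := by
  induction n with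
  | zero => simp
  | succ n ih =>
    have hinit := ih (y := Fin.init y) fun k => by simpa [Fin.init] using h k.castSucc
    have hlast := h (Fin.last n)
    simp only [Fin.init, Fin.castSucc_zero, Fin.succ_last] at hinit hlast
    push_cast
    linarith

theorem mul_le_two_pi_of_cos_sub_le {n : ℕ} {θ : Fin (n + 2) → ℝ} {α : ℝ} (hα : α ≤ π)
    (hspread : ∀ i j, θ i - θ j < 2 * π) (hsep : ∀ i j, i ≠ j → cos (θ i - θ j) ≤ cos α) :
    (n + 2) * α ≤ 2 * π := by
  set σ := Tuple.sort θ
  set y := θ ∘ σ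
  have hmono : Monotone y := Tuple.monotone_sort θ
  have hgap (k : Fin (n + 1)) : α ≤ y k.succ - y k.castSucc :=
    le_of_cos_le_cos (sub_nonneg.2 (hmono k.castSucc_le_succ)) hα
      (hsep _ _ (σ.injective.ne Fin.castSucc_lt_succ.ne'))
  have hspan : y (Fin.last _) - y 0 < 2 * π := hspread _ _
  have hwrap : α ≤ 2 * π - (y (Fin.last _) - y 0) :=
    le_of_cos_le_cos (by linarith) hα
      (by rw [cos_two_pi_sub]; exact hsep _ _ (σ.injective.ne Fin.last_pos.ne'))
  have hsum := mul_le_last_sub_zero_of_le_succ_sub hgap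
  push_cast at hsum ⊢
  linarith

-- `0.5713` lies just below `Φ = arccos (6.068 / 7.227) ≈ 0.5715` and still `11 · 0.5713 > 2π`.
theorem le_cos_0_5713 : (0.8397 : ℝ) ≤ cos 0.5713 := by
  have h := one_sub_sq_div_two_le_cos (x := 0.5713 / 2)
  have hdouble : cos 0.5713 = 2 * cos (0.5713 / 2) ^ 2 - 1 := by
    rw [← cos_two_mul]; norm_num
  rw [hdouble]
  nlinarith

/-- No 11 points with pairwise distances ≥ p = 1.409 in the annulus 1.5 ≤ ρ ≤ 1 + p. -/
theorem stmt_15 :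
    ¬ ∃ X : Fin 11 → EuclideanSpace ℝ (Fin 2),
      Function.Injective X ∧
      (∀ i, (1.5 : ℝ) ≤ ‖X i‖ ∧ ‖X i‖ ≤ 1 + 1.409) ∧
      (∀ i j, i ≠ j → (1.409 : ℝ) ≤ dist (X i) (X j)) := by
  rintro ⟨X, -, hnorm, hdist⟩
  set e := Complex.orthonormalBasisOneI.repr.symm
  have hsep (i j) (hij : i ≠ j) : cos ((e (X i)).arg - (e (X j)).arg) ≤ cos 0.5713 := by
    have := Complex.cos_arg_sub_arg_le_of_mem_annulus (R := 1 + 1.409) (z := e (X i))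
      (w := e (X j)) (by norm_num : (0 : ℝ) < 1.5) (by norm_num : (0 : ℝ) ≤ 1.409) (by norm_num)
      (by simpa only [e.norm_map, Set.mem_Icc] using hnorm i)
      (by simpa only [e.norm_map, Set.mem_Icc] using hnorm j)
      (by simpa only [← dist_eq_norm, e.dist_map] using hdist i j hij)
    linarith [le_cos_0_5713]
  have h11 := mul_le_two_pi_of_cos_sub_le (θ := fun i => (e (X i)).arg)
    (by linarith [pi_gt_three]) (fun i j => (abs_lt.1 (Complex.abs_arg_sub_arg_lt _ _)).2) hsep
  norm_num at h11
  linarith [pi_lt_d6]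
end
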